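/- There is an absolute constant C' > 0 such that the following holds for all n ≥ 2. Let v, p ∈ ℝ^n with ‖p‖_∞ ≤ 1/2, let v = ∑_{j∈J} v^{(j)} be the binary decomposition of v, let r ≥ 0 be an integer, and let α > 0 be such that there are at least 2r·log(n) elements j ∈ J with 2^{-j-1} ≥ α. Then the Lévy concentration function of the biased linear form satisfies Q(α, X_{v,p}) ≤ C' · 2^{-r}. -/

import Mathlib

open MeasureTheory
open scoped Classical

/-- The biased product measure `μ_p` on `{-1,1}^n ⊂ ℝ^n`: coordinates are independent,
with `Pr[x i = 1] = (1 + p i)/2` and `Pr[x i = -1] = (1 - p i)/2`. -/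
noncomputable def cubeMeasure {n : ℕ} (p : Fin n → ℝ) : Measure (Fin n → ℝ) :=
  Measure.pi fun i =>
    ENNReal.ofReal ((1 + p i) / 2) • Measure.dirac (1 : ℝ) +
      ENNReal.ofReal ((1 - p i) / 2) • Measure.dirac (-1 : ℝ)

/-- The Lévy concentration function `Q(α, X_{v,p}) = sup_t Pr_{x ~ μ_p}[|⟨v,x⟩ - t| < α]`
of the biased linear form `X_{v,p} = ⟨v, x⟩`, `x ~ μ_p`. -/
noncomputable def levyQLinForm {n : ℕ} (v p : Fin n → ℝ) (α : ℝ) : ENNReal :=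
  ⨆ t : ℝ, cubeMeasure p {x | |(∑ i, v i * x i) - t| < α}

/-- The dyadic class `K(j)` of the binary decomposition of `v`: the set of coordinates
`k` with `2^{-j-1} < |v k| ≤ 2^{-j}`. -/
noncomputable def binClass {n : ℕ} (v : Fin n → ℝ) (j : ℤ) : Finset (Fin n) :=
  Finset.univ.filter fun k => (2 : ℝ) ^ (-j - 1) < |v k| ∧ |v k| ≤ (2 : ℝ) ^ (-j)

/-- The index set `J` of the binary decomposition of `v`: those `j` with `K(j) ≠ ∅`. -/
def binIdx {n : ℕ} (v : Fin n → ℝ) : Set ℤ := {j | (binClass v j).Nonempty}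

open scoped NNReal ENNReal

/-!
Pick one coordinate from each dyadic class `K(j)`, `j ∈ S`, keeping only the classes whose index
`j` lies in the most popular residue class mod 3. This leaves a set `T` of at least `|S| / 3`
coordinates whose weights `|v i| ≥ α` are pairwise separated by a factor greater than 3. For such
lacunary weights, two sign vectors that differ on `T` give values of `⟨v, x⟩` at distance at least
`2 min |v i| ≥ 2 α`; so once the coordinates off `T` are fixed, at most one sign pattern on `T`
lands in a given window of length `2 α`. Each sign has probability at most `3 / 4`, hence every
window has mass at most `(3 / 4) ^ |T|`, and `|T| ≥ (2 / 3) r log n` makes this `O(2 ^ (-r))`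
(when `n < 64`, `r` is bounded because `|S| ≤ n`).
-/

namespace MeasureTheory.Measure

theorem pi_sum_smul_dirac {ι β X : Type*} [Fintype ι] [DecidableEq ι] [Fintype β]
    [MeasurableSpace X]    (w : ι → β → ℝ≥0) (x : ι → β → X) :
    Measure.pi (fun i => ∑ b, w i b • dirac (x i b)) =
      ∑ ε : ι → β, (∏ i, w i (ε i)) • dirac (fun i => x i (ε i)) := by
  refine Measure.pi_eq (μ := fun i => ∑ b, w i b • dirac (x i b)) fun s hs => ?_
  simp only [coe_finsetSum, Finset.sum_apply, smul_apply, ENNReal.smul_def, smul_eq_mul,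
    dirac_apply' _ (MeasurableSet.univ_pi hs), dirac_apply' _ (hs _), ENNReal.ofNNReal_finsetProd]
  rw [Fintype.prod_sum]
  refine Finset.sum_congr rfl fun ε _ => ?_
  rw [← Finset.coe_univ, Set.indicator_pi_one_apply, ← Finset.prod_mul_distrib]

end MeasureTheory.Measure

theorem Finset.sum_prod_le_pow_of_injOn_restrict_compl {ι β : Type*} [Fintype ι] [DecidableEq ι]
    [Fintype β] (w : ι → β → ℝ≥0) (hw : ∀ i, ∑ b, w i b ≤ 1) (T : Finset ι) {q : ℝ≥0}
    (hq : ∀ i ∈ T, ∀ b, w i b ≤ q) (G : Finset (ι → β))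
    (hG : Set.InjOn (Tᶜ).restrict (G : Set (ι → β))) :
    ∑ ε ∈ G, ∏ i, w i (ε i) ≤ q ^ T.card := by
  have hsplit : ∀ ε : ι → β, ∏ i, w i (ε i) ≤ q ^ T.card * ∏ i : (Tᶜ : Finset ι), w i (ε i) :=
    fun ε => by
      rw [← Finset.prod_mul_prod_compl T, Finset.prod_coe_sort Tᶜ (fun i => w i (ε i))]
      gcongr
      exact Finset.prod_le_pow_card _ _ _ fun i hi => hq i hi _
  calc ∑ ε ∈ G, ∏ i, w i (ε i)
      ≤ q ^ T.card * ∑ ε ∈ G, ∏ i : (Tᶜ : Finset ι), w i (ε i) := by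
        rw [Finset.mul_sum]; exact Finset.sum_le_sum fun ε _ => hsplit ε
    _ = q ^ T.card * ∑ η ∈ G.image (Tᶜ).restrict, ∏ i : (Tᶜ : Finset ι), w i (η i) := by
        rw [Finset.sum_image hG]; rfl
    _ ≤ q ^ T.card * ∑ η : (Tᶜ : Finset ι) → β, ∏ i : (Tᶜ : Finset ι), w i (η i) := by
        gcongr; exact Finset.subset_univ _
    _ ≤ q ^ T.card := by
        rw [← Fintype.prod_sum]
        exact mul_le_of_le_one_right' (Finset.prod_le_one' fun i _ => hw i)

section Lacunary

variable {ι : Type*} {s : Finset ι} {c : ι → ℝ}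

theorem three_mul_abs_le_of_abs_le {a b : ℝ} (hlac : 3 * |a| ≤ |b| ∨ 3 * |b| ≤ |a|)
    (hle : |a| ≤ |b|) : 3 * |a| ≤ |b| := by
  rcases hlac with h | h
  · exact h
  · linarith [abs_nonneg a, abs_nonneg b]

theorem Finset.sum_abs_le_of_lacunary [DecidableEq ι]
    (hlac : (s : Set ι).Pairwise fun i j => 3 * |c i| ≤ |c j| ∨ 3 * |c j| ≤ |c i|)
    {B : ℝ} (hB0 : 0 ≤ B) (hB : ∀ i ∈ s, |c i| ≤ B) :
    ∑ i ∈ s, |c i| ≤ 3 / 2 * B := by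
  induction s using Finset.induction_on_max_value (fun i => |c i|) generalizing B with
  | empty => simpa using hB0
  | insert a s has hmax ih =>
    have hrest : ∑ i ∈ s, |c i| ≤ 3 / 2 * (|c a| / 3) :=
      ih (hlac.mono (by simp)) (by positivity) fun i hi => by
        have hia : i ≠ a := fun h => has (h ▸ hi)
        have := three_mul_abs_le_of_abs_le
          (hlac (by simp [hi]) (by simp) hia) (hmax i hi)
        linarith
    rw [Finset.sum_insert has]
    linarith [hB a (by simp)]

theorem Finset.exists_abs_le_abs_sum_of_lacunary [DecidableEq ι] (hs : s.Nonempty)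
    (hlac : (s : Set ι).Pairwise fun i j => 3 * |c i| ≤ |c j| ∨ 3 * |c j| ≤ |c i|) :
    ∃ i ∈ s, |c i| ≤ |∑ j ∈ s, c j| := by
  obtain ⟨M, hM, hmax⟩ := s.exists_max_image (fun i => |c i|) hs
  have hsmall : ∀ i ∈ s.erase M, 3 * |c i| ≤ |c M| := fun i hi =>
    three_mul_abs_le_of_abs_le
      (hlac (Finset.mem_of_mem_erase hi) hM (Finset.ne_of_mem_erase hi))
      (hmax i (Finset.mem_of_mem_erase hi))
  have hrest : |∑ j ∈ s.erase M, c j| ≤ |c M| / 2 := by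
    refine (Finset.abs_sum_le_sum_abs _ _).trans ?_
    have := Finset.sum_abs_le_of_lacunary (hlac.mono (Finset.coe_subset.2 (s.erase_subset M)))
      (by positivity : 0 ≤ |c M| / 3) fun i hi => by linarith [hsmall i hi]
    linarith
  have hsum : |c M| / 2 ≤ |∑ j ∈ s, c j| := by
    rw [← Finset.add_sum_erase s c hM]
    linarith [abs_sub_abs_le_abs_add (c M) (∑ j ∈ s.erase M, c j)]
  rcases (s.erase M).eq_empty_or_nonempty with hempty | ⟨i, hi⟩
  · refine ⟨M, hM, ?_⟩
    rw [← Finset.add_sum_erase s c hM, hempty, Finset.sum_empty, add_zero]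
  · exact ⟨i, Finset.mem_of_mem_erase hi, by linarith [hsmall i hi, abs_nonneg (c M)]⟩

end Lacunary

theorem abs_sub_eq_two_of_ne {a b : ℝ} (ha : a = 1 ∨ a = -1) (hb : b = 1 ∨ b = -1) (hab : a ≠ b) :
    |a - b| = 2 := by
  revert hab
  rcases ha with rfl | rfl <;> rcases hb with rfl | rfl <;> norm_num

theorem eq_of_lacunary_of_abs_sub_lt {ι : Type*} [Fintype ι] [DecidableEq ι] {v : ι → ℝ}
    {T : Finset ι} {α t : ℝ}
    (hlac : (T : Set ι).Pairwise fun i j => 3 * |v i| ≤ |v j| ∨ 3 * |v j| ≤ |v i|)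
    (hα : ∀ i ∈ T, α ≤ |v i|) {x y : ι → ℝ} (hx : ∀ i, x i = 1 ∨ x i = -1)
    (hy : ∀ i, y i = 1 ∨ y i = -1) (hxt : |∑ i, v i * x i - t| < α)
    (hyt : |∑ i, v i * y i - t| < α) (hxy : ∀ i ∉ T, x i = y i) : x = y := by
  by_contra hne
  set E := Finset.univ.filter fun i => x i ≠ y i
  have hET : E ⊆ T := fun i hi => by
    by_contra hiT
    exact (Finset.mem_filter.1 hi).2 (hxy i hiT)
  have hE : E.Nonempty := by
    obtain ⟨i, hi⟩ := Function.ne_iff.1 hne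
    exact ⟨i, Finset.mem_filter.2 ⟨Finset.mem_univ i, hi⟩⟩
  set c := fun i => v i * (x i - y i)
  have hc : ∀ i ∈ E, |c i| = 2 * |v i| := fun i hi => by
    rw [abs_mul, abs_sub_eq_two_of_ne (hx i) (hy i) (Finset.mem_filter.1 hi).2, mul_comm]
  have hdiff : ∑ i, v i * x i - ∑ i, v i * y i = ∑ i ∈ E, c i := by
    rw [Finset.sum_subset (Finset.subset_univ E) fun i _ hi => ?_, ← Finset.sum_sub_distrib]
    · exact Finset.sum_congr rfl fun i _ => (mul_sub (v i) (x i) (y i)).symm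
    · rw [Finset.mem_filter, not_and, not_not] at hi
      simp [c, hi (Finset.mem_univ i)]
  have hclac : (E : Set ι).Pairwise fun i j => 3 * |c i| ≤ |c j| ∨ 3 * |c j| ≤ |c i| :=
    (hlac.mono (Finset.coe_subset.2 hET)).imp_on fun i hi j hj _ h => by
      rw [hc i hi, hc j hj]
      rcases h with h | h
      · exact Or.inl (by linarith)
      · exact Or.inr (by linarith)
  obtain ⟨i, hiE, hi⟩ := Finset.exists_abs_le_abs_sum_of_lacunary hE hclac
  have hwindow : |∑ i, v i * x i - ∑ i, v i * y i| < 2 * α := by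
    have := abs_sub_le (∑ i, v i * x i) t (∑ i, v i * y i)
    rw [abs_sub_comm t] at this
    linarith
  rw [hdiff] at hwindow
  linarith [hα i (hET hiE), hc i hiE]

def signOfBool (b : Bool) : ℝ := if b then 1 else -1

theorem signOfBool_injective : Function.Injective signOfBool := by
  intro a b; cases a <;> cases b <;> norm_num [signOfBool]

theorem signOfBool_eq_one_or_eq_neg_one (b : Bool) : signOfBool b = 1 ∨ signOfBool b = -1 := by
  cases b <;> simp [signOfBool]

theorem cubeMeasure_eq_sum {n : ℕ} (p : Fin n → ℝ) :
    cubeMeasure p = ∑ ε : Fin n → Bool,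
      (∏ i, ((1 + signOfBool (ε i) * p i) / 2).toNNReal) •
        Measure.dirac (fun i => signOfBool (ε i)) := by
  rw [← Measure.pi_sum_smul_dirac (fun i b => ((1 + signOfBool b * p i) / 2).toNNReal)
    fun _ b => signOfBool b]
  simp only [cubeMeasure, Fintype.sum_bool, signOfBool, if_true, Bool.false_eq_true, if_false,
    one_mul, neg_one_mul, ← sub_eq_add_neg]
  -- `ENNReal.ofReal x • μ` and `x.toNNReal • μ` agree definitionally.
  rfl

theorem cubeMeasure_le_pow {n : ℕ} {p : Fin n → ℝ} {δ : ℝ} (hp : ∀ i, |p i| ≤ δ) (hδ : δ ≤ 1)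
    {A : Set (Fin n → ℝ)} (hA : MeasurableSet A) (T : Finset (Fin n))
    (hAT : ∀ x ∈ A, ∀ y ∈ A, (∀ i, x i = 1 ∨ x i = -1) → (∀ i, y i = 1 ∨ y i = -1) →
      (∀ i ∉ T, x i = y i) → x = y) :
    cubeMeasure p A ≤ ENNReal.ofReal ((1 + δ) / 2) ^ T.card := by
  set w : Fin n → Bool → ℝ≥0 := fun i b => ((1 + signOfBool b * p i) / 2).toNNReal
  have hw_le : ∀ i b, w i b ≤ ((1 + δ) / 2).toNNReal := fun i b => by
    refine Real.toNNReal_le_toNNReal ?_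
    rcases signOfBool_eq_one_or_eq_neg_one b with h | h <;> rw [h] <;> linarith [abs_le.1 (hp i)]
  have hw_sum : ∀ i, ∑ b, w i b ≤ 1 := fun i => by
    have := abs_le.1 ((hp i).trans hδ)
    simp only [w, Fintype.sum_bool, signOfBool, if_true, Bool.false_eq_true, if_false]
    rw [← Real.toNNReal_add (by linarith) (by linarith), Real.toNNReal_le_one]
    linarith
  set G := Finset.univ.filter fun ε : Fin n → Bool => (fun i => signOfBool (ε i)) ∈ A
  have hG : Set.InjOn (Tᶜ).restrict (G : Set (Fin n → Bool)) := fun ε hε τ hτ hετ => by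
    simp only [G, Finset.coe_filter, Finset.mem_univ, true_and, Set.mem_ofPred_eq] at hε hτ
    funext i
    refine signOfBool_injective (congrFun (hAT _ hε _ hτ
      (fun _ => signOfBool_eq_one_or_eq_neg_one _) (fun _ => signOfBool_eq_one_or_eq_neg_one _)
      fun i hi => ?_) i)
    exact congrArg signOfBool (congrFun hετ ⟨i, Finset.mem_compl.2 hi⟩)
  have hsum := Finset.sum_prod_le_pow_of_injOn_restrict_compl w hw_sum T
    (fun i _ b => hw_le i b) G hG
  calc cubeMeasure p A = ∑ ε ∈ G, ((∏ i, w i (ε i) : ℝ≥0) : ℝ≥0∞) := by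
        rw [cubeMeasure_eq_sum, Finset.sum_filter]
        simp only [Measure.coe_finsetSum, Finset.sum_apply, Measure.smul_apply, ENNReal.smul_def,
          smul_eq_mul, Measure.dirac_apply' _ hA, Set.indicator_apply, Pi.one_apply, mul_ite,
          mul_one, mul_zero]
        rfl
    _ ≤ ENNReal.ofReal ((1 + δ) / 2) ^ T.card := by
        rw [← ENNReal.ofNNReal_finsetSum, ENNReal.ofReal, ← ENNReal.coe_pow]
        exact ENNReal.coe_le_coe.2 hsum

theorem levyQLinForm_le_of_lacunary {n : ℕ} {v p : Fin n → ℝ} {δ α : ℝ} (hp : ∀ i, |p i| ≤ δ)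
    (hδ : δ ≤ 1) {T : Finset (Fin n)}
    (hlac : (T : Set (Fin n)).Pairwise fun i j => 3 * |v i| ≤ |v j| ∨ 3 * |v j| ≤ |v i|)
    (hα : ∀ i ∈ T, α ≤ |v i|) :
    levyQLinForm v p α ≤ ENNReal.ofReal ((1 + δ) / 2) ^ T.card :=
  iSup_le fun _ => cubeMeasure_le_pow hp hδ (measurableSet_lt (by fun_prop) measurable_const) T
    fun _ hx _ hy hx₁ hy₁ hxy => eq_of_lacunary_of_abs_sub_lt hlac hα hx₁ hy₁ hx hy hxy

theorem Finset.exists_subset_pairwise_modEq (S : Finset ℤ) {d : ℕ} (hd : 0 < d) :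
    ∃ S' ⊆ S, (S.card : ℝ) ≤ d * S'.card ∧ (S' : Set ℤ).Pairwise fun a b => a ≡ b [ZMOD d] := by
  obtain ⟨y, -, hy⟩ := Finset.exists_le_card_fiber_of_nsmul_le_card_of_maps_to
    (s := S) (f := fun j => j % (d : ℤ)) (t := Finset.Ico 0 (d : ℤ)) (b := (S.card : ℝ) / d)
    (fun j _ => Finset.mem_Ico.2 ⟨Int.emod_nonneg _ (by omega), Int.emod_lt_of_pos _ (by omega)⟩)
    ⟨0, Finset.mem_Ico.2 ⟨le_rfl, by omega⟩⟩
    (by rw [Int.card_Ico, sub_zero, Int.toNat_natCast, nsmul_eq_mul,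
      mul_div_cancel₀ _ (by positivity)])
  refine ⟨S.filter fun j => j % d = y, Finset.filter_subset _ _, ?_, ?_⟩
  · rwa [div_le_iff₀' (by positivity)] at hy
  · intro a ha b hb _
    exact (Finset.mem_filter.1 ha).2.trans (Finset.mem_filter.1 hb).2.symm

section BinaryDecomposition

variable {n : ℕ} {v : Fin n → ℝ}

theorem two_pow_mul_abs_lt_of_mem_binClass {i i' : Fin n} {j j' : ℤ} (hi : i ∈ binClass v j)
    (hi' : i' ∈ binClass v j') (k : ℕ) (hjj' : j + k + 1 ≤ j') : 2 ^ k * |v i'| < |v i| := by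
  simp only [binClass, Finset.mem_filter, Finset.mem_univ, true_and] at hi hi'
  calc (2 : ℝ) ^ k * |v i'| ≤ 2 ^ (k : ℤ) * 2 ^ (-j - k - 1) := by
        rw [zpow_natCast]
        gcongr
        exact hi'.2.trans (zpow_le_zpow_right₀ one_le_two (by omega))
    _ = 2 ^ (-j - 1) := by rw [← zpow_add₀ two_ne_zero]; ring_nf
    _ < |v i| := hi.1

theorem pairwise_disjoint_binClass (v : Fin n → ℝ) :
    Pairwise (Function.onFun Disjoint (binClass v)) := by
  have key : ∀ {j j'}, j < j' → Disjoint (binClass v j) (binClass v j') := fun hjj' =>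
    Finset.disjoint_left.2 fun _ hi hi' =>
      (two_pow_mul_abs_lt_of_mem_binClass hi hi' 0 (by omega)).ne (by ring)
  intro j j' hne
  rcases lt_or_gt_of_ne hne with h | h
  · exact key h
  · exact (key h).symm

theorem card_le_of_subset_binIdx {S : Finset ℤ} (hS : ↑S ⊆ binIdx v) : S.card ≤ n :=
  calc S.card ≤ (S.biUnion (binClass v)).card :=
        Finset.card_le_card_biUnion ((pairwise_disjoint_binClass v).set_pairwise _) hS
    _ ≤ n := (Finset.card_le_univ _).trans_eq (Fintype.card_fin n)

theorem exists_lacunary_of_subset_binIdx {S : Finset ℤ}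
    (hS : ↑S ⊆ binIdx v) (hmod : (S : Set ℤ).Pairwise fun a b => a ≡ b [ZMOD 3]) :
    ∃ T : Finset (Fin n), T.card = S.card ∧
      ((T : Set (Fin n)).Pairwise fun i j => 3 * |v i| ≤ |v j| ∨ 3 * |v j| ≤ |v i|) ∧
      ∀ i ∈ T, ∃ j ∈ S, i ∈ binClass v j := by
  choose k hk using fun j : S => hS j.2
  have hk_inj : Function.Injective k := fun a b hab => Subtype.ext <| by
    by_contra hne
    exact Finset.disjoint_left.1 (pairwise_disjoint_binClass v hne) (hk a) (hab ▸ hk b)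
  have hsep : ∀ a b : S, (a : ℤ) < b → 3 * |v (k b)| ≤ |v (k a)| := fun a b hab => by
    have hgap : (a : ℤ) + (2 : ℕ) + 1 ≤ b := by
      have := hmod a.2 b.2 hab.ne
      simp only [Int.ModEq] at this
      omega
    have := two_pow_mul_abs_lt_of_mem_binClass (hk a) (hk b) 2 hgap
    norm_num at this
    linarith [abs_nonneg (v (k b))]
  refine ⟨Finset.univ.image k, by rw [Finset.card_image_of_injective _ hk_inj, Finset.card_univ,
    Fintype.card_coe], ?_, fun i hi => ?_⟩
  · simp only [Finset.coe_image, Finset.coe_univ, Set.image_univ]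
    rintro _ ⟨a, rfl⟩ _ ⟨b, rfl⟩ hab
    rcases lt_or_gt_of_ne (fun h : (a : ℤ) = b => hab (congrArg k (Subtype.ext h))) with h | h
    · exact Or.inr (hsep a b h)
    · exact Or.inl (hsep b a h)
  · obtain ⟨a, -, rfl⟩ := Finset.mem_image.1 hi
    exact ⟨a, a.2, hk a⟩

end BinaryDecomposition

theorem three_quarters_pow_le {q r m n : ℕ} (hn : 2 ≤ n) (hmn : m ≤ n) (hmq : (m : ℝ) ≤ 3 * q)
    (hrm : 2 * r * Real.log n ≤ m) : (3 / 4 : ℝ) ^ q ≤ Real.exp 32 / 2 ^ r := by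
  have hlog2 : 0 < Real.log 2 := Real.log_pos one_lt_two
  have hexp : (3 / 4 : ℝ) ^ q ≤ Real.exp (-(q / 4)) :=
    calc (3 / 4 : ℝ) ^ q ≤ Real.exp (-(1 / 4)) ^ q :=
          pow_le_pow_left₀ (by norm_num) (by linarith [Real.add_one_le_exp (-(1 / 4))]) q
      _ = Real.exp (-(q / 4)) := by rw [← Real.exp_nat_mul]; ring_nf
  have hpow : (2 : ℝ) ^ r = Real.exp (r * Real.log 2) := by
    rw [Real.exp_nat_mul, Real.exp_log two_pos]
  have hkey : r * Real.log 2 - q / 4 ≤ 32 := by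
    rcases le_or_gt 64 n with h64 | h64
    · have : 6 * Real.log 2 ≤ Real.log n := by
        rw [← Real.log_rpow two_pos]
        exact Real.log_le_log (by positivity) (by norm_num; exact_mod_cast h64)
      nlinarith [(Nat.cast_nonneg r : (0 : ℝ) ≤ r)]
    · have : Real.log 2 ≤ Real.log n := Real.log_le_log two_pos (by exact_mod_cast hn)
      have : (m : ℝ) < 64 := by exact_mod_cast hmn.trans_lt h64
      nlinarith [(Nat.cast_nonneg r : (0 : ℝ) ≤ r), (Nat.cast_nonneg q : (0 : ℝ) ≤ q)]
  rw [hpow, ← Real.exp_sub]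
  exact hexp.trans (Real.exp_le_exp.2 (by linarith))

/-- Lemma 2.12, part 2: there is an absolute constant `C' > 0` such that
for all `n ≥ 2`, if `‖p‖_∞ ≤ 1/2`, `r ≥ 0` is an integer, and at least `2r·log n`
elements `j` of the binary-decomposition index set `J` of `v` satisfy `2^{-j-1} ≥ α`,
then `Q(α, X_{v,p}) ≤ C' · 2^{-r}`. -/
theorem stmt_6 :
    ∃ C' : ℝ, 0 < C' ∧
      ∀ (n : ℕ), 2 ≤ n →
        ∀ (v p : Fin n → ℝ), (∀ i, |p i| ≤ 1 / 2) →
          ∀ (r : ℕ) (α : ℝ), 0 < α →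
            (∃ S : Finset ℤ, ↑S ⊆ binIdx v ∧ (∀ j ∈ S, α ≤ (2 : ℝ) ^ (-j - 1)) ∧
              2 * r * Real.log n ≤ S.card) →
            levyQLinForm v p α ≤ ENNReal.ofReal (C' / 2 ^ r) := by
  refine ⟨Real.exp 32, Real.exp_pos 32, ?_⟩
  rintro n hn v p hp r α - ⟨S, hSJ, hSα, hcard⟩
  obtain ⟨S', hS'S, hS'card, hS'mod⟩ := S.exists_subset_pairwise_modEq three_pos
  obtain ⟨T, hTcard, hTlac, hTS'⟩ := exists_lacunary_of_subset_binIdx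
    ((Finset.coe_subset.2 hS'S).trans hSJ) hS'mod
  have hTα : ∀ i ∈ T, α ≤ |v i| := fun i hi => by
    obtain ⟨j, hj, hij⟩ := hTS' i hi
    simp only [binClass, Finset.mem_filter, Finset.mem_univ, true_and] at hij
    exact (hSα j (hS'S hj)).trans hij.1.le
  calc levyQLinForm v p α ≤ ENNReal.ofReal ((1 + 1 / 2) / 2) ^ T.card :=
        levyQLinForm_le_of_lacunary hp (by norm_num) hTlac hTα
    _ = ENNReal.ofReal ((3 / 4) ^ T.card) := by norm_num [ENNReal.ofReal_pow]
    _ ≤ ENNReal.ofReal (Real.exp 32 / 2 ^ r) := ENNReal.ofReal_le_ofReal <|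
        three_quarters_pow_le hn (card_le_of_subset_binIdx hSJ) (by rwa [hTcard]) hcard
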